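/- If λ is an ℓ-partition, then the i-signature of λ equals its reduced i-signature; that is, there is no addable i-box of λ occurring in a row strictly above a removable i-box of λ. -/

import Mathlib

/-- The hook length of the box `(a, b)` (0-indexed row `a`, column `b`)
of the Young diagram `μ`: the number of boxes to the right in its row,
plus the number of boxes below in its column, plus one. -/
def hookLen (μ : YoungDiagram) (a b : ℕ) : ℕ :=
  μ.rowLen a + μ.colLen b - a - b - 1

/-- A partition (Young diagram) is an `ℓ`-core when no box has hook length
divisible by `ℓ`. -/
def IsCore (ℓ : ℕ) (μ : YoungDiagram) : Prop :=
  ∀ a b : ℕ, (a, b) ∈ μ → ¬ ℓ ∣ hookLen μ a b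

/-- Two cells are adjacent if they share an edge. -/
def AdjCell (p q : ℕ × ℕ) : Prop :=
  (p.1 = q.1 ∧ (p.2 = q.2 + 1 ∨ q.2 = p.2 + 1)) ∨
  (p.2 = q.2 ∧ (p.1 = q.1 + 1 ∨ q.1 = p.1 + 1))

/-- A finite set of cells is connected if any two of its cells are joined by a
path of edge-adjacent cells inside the set. -/
def ConnectedCells (s : Finset (ℕ × ℕ)) : Prop :=
  ∀ p ∈ s, ∀ q ∈ s,
    Relation.ReflTransGen (fun x y => x ∈ s ∧ y ∈ s ∧ AdjCell x y) p q

/-- A set of cells contains no 2×2 square. -/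
def No2x2 (s : Finset (ℕ × ℕ)) : Prop :=
  ¬ ∃ a b : ℕ, (a, b) ∈ s ∧ (a + 1, b) ∈ s ∧ (a, b + 1) ∈ s ∧ (a + 1, b + 1) ∈ s

/-- `s` is a removable `ℓ`-rim hook of the Young diagram `lam`: a connected set of
`ℓ` cells of `lam`, containing no 2×2 square, whose removal from `lam` leaves the
Young diagram of a partition. -/
def IsRemovableRimHook (ℓ : ℕ) (lam : YoungDiagram) (s : Finset (ℕ × ℕ)) : Prop :=
  ∃ μ : YoungDiagram, μ.cells ⊆ lam.cells ∧ s = lam.cells \ μ.cells ∧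
    s.card = ℓ ∧ ConnectedCells s ∧ No2x2 s

/-- A set of cells all lying in a single row. -/
def HorizontalCells (s : Finset (ℕ × ℕ)) : Prop := ∀ p ∈ s, ∀ q ∈ s, p.1 = q.1

/-- A set of cells all lying in a single column. -/
def VerticalCells (s : Finset (ℕ × ℕ)) : Prop := ∀ p ∈ s, ∀ q ∈ s, p.2 = q.2

/-- Carter's condition (⋆): for all pairs of boxes in the same column of `lam`,
`ℓ` divides one hook length iff it divides the other. -/
def StarCond (ℓ : ℕ) (lam : YoungDiagram) : Prop :=
  ∀ a b c : ℕ, (a, c) ∈ lam → (b, c) ∈ lam →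
    (ℓ ∣ hookLen lam a c ↔ ℓ ∣ hookLen lam b c)

/-- `b` is obtained from `a` by removing a horizontal `ℓ`-rim hook;
equivalently `a` is obtained from `b` by adding a horizontal `ℓ`-rim hook. -/
def RemoveHorizHook (ℓ : ℕ) (a b : YoungDiagram) : Prop :=
  ∃ s, IsRemovableRimHook ℓ a s ∧ HorizontalCells s ∧ b.cells = a.cells \ s

/-- A partition is `ℓ`-regular if it has no `ℓ` equal nonzero parts. -/
def Regular (ℓ : ℕ) (lam : YoungDiagram) : Prop :=
  ∀ i : ℕ, lam.rowLen i = lam.rowLen (i + ℓ - 1) → lam.rowLen i = 0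

/-- An `ℓ`-partition: an `ℓ`-regular partition each of whose removable `ℓ`-rim hooks
is horizontal, and such that this remains true after removing any sequence of
horizontal `ℓ`-rim hooks. -/
def IsEllPartition (ℓ : ℕ) (lam : YoungDiagram) : Prop :=
  Regular ℓ lam ∧
  ∀ μ : YoungDiagram, Relation.ReflTransGen (RemoveHorizHook ℓ) lam μ →
    ∀ s, IsRemovableRimHook ℓ μ s → HorizontalCells s

/-- The residue of the position in row `a`, column `b` (0-indexed): `(b - a) mod ℓ`. -/
def resBox (ℓ : ℕ) (a b : ℕ) : ZMod ℓ := (b : ZMod ℓ) - (a : ZMod ℓ)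

/-- `(a,b)` is a removable box of `lam`: it is a box of `lam` whose removal
leaves a Young diagram. -/
def IsRemovableBox (lam : YoungDiagram) (a b : ℕ) : Prop :=
  (a, b) ∈ lam ∧ (a, b + 1) ∉ lam ∧ (a + 1, b) ∉ lam

/-- `(a,b)` is an addable box of `lam`: it is not a box of `lam` and adding it
yields a Young diagram. -/
def IsAddableBox (lam : YoungDiagram) (a b : ℕ) : Prop :=
  (a, b) ∉ lam ∧ (b = 0 ∨ (a, b - 1) ∈ lam) ∧ (a = 0 ∨ (a - 1, b) ∈ lam)


/-!
Encode a partition by its beta numbers `β r = λ_r - r`, a strictly decreasing sequence read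
as the beads of an abacus. An addable `i`-box in row `a` is a bead `v` followed by a gap, a
removable `i`-box in a lower row is a bead `w < v` preceded by a gap, and equal residues mean
`ℓ ∣ v + 1 - w`. Going down the runner of `v` from the bead `v` to the gap `w - 1`, one meets a
bead `δ ≥ w - 1 + ℓ` above a gap `δ - ℓ`. Sliding it down removes an `ℓ`-rim hook spanning the
rows whose beads lie in `(δ - ℓ, δ]`; since `λ` is an `ℓ`-partition that hook is horizontal, so
`δ` is the only bead there, and after the move the beads `δ - ℓ` and `w` form the same pattern
with a smaller top bead. Horizontal hook removals preserve the hypothesis, so this descent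
cannot go on forever.
-/

namespace YoungDiagram

def restrictRowLen (μ : YoungDiagram) (f : ℕ → ℕ) (hf : Antitone f) : YoungDiagram where
  cells := μ.cells.filter fun p => p.2 < f p.1
  isLowerSet p q hqp hp := by
    simp only [Finset.coe_filter, Set.mem_ofPred_eq, mem_cells] at hp ⊢
    exact ⟨μ.isLowerSet hqp hp.1, (hqp.2.trans_lt hp.2).trans_le (hf hqp.1)⟩

theorem mem_restrictRowLen {μ : YoungDiagram} {f : ℕ → ℕ} {hf : Antitone f} {i j : ℕ} :
    (i, j) ∈ μ.restrictRowLen f hf ↔ (i, j) ∈ μ ∧ j < f i := by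
  rw [← mem_cells]
  simp [restrictRowLen]

theorem restrictRowLen_le (μ : YoungDiagram) (f : ℕ → ℕ) (hf : Antitone f) :
    μ.restrictRowLen f hf ≤ μ := fun p hp => by
  obtain ⟨i, j⟩ := p
  exact (mem_restrictRowLen.mp hp).1

theorem rowLen_restrictRowLen (μ : YoungDiagram) (f : ℕ → ℕ) (hf : Antitone f) (i : ℕ) :
    (μ.restrictRowLen f hf).rowLen i = min (f i) (μ.rowLen i) :=
  eq_of_forall_lt_iff fun j => by
    rw [← mem_iff_lt_rowLen, mem_restrictRowLen, mem_iff_lt_rowLen, lt_min_iff, and_comm]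

theorem card_cells_sdiff {μ ν : YoungDiagram} (R : Finset ℕ)
    (hR : ∀ i ∉ R, ν.rowLen i = μ.rowLen i) :
    (μ.cells \ ν.cells).card = ∑ i ∈ R, (μ.rowLen i - ν.rowLen i) := by
  have hrows : ∀ p ∈ μ.cells \ ν.cells, p.1 ∈ R := by
    rintro ⟨i, j⟩ hp
    by_contra hi
    simp only [Finset.mem_sdiff, mem_cells, mem_iff_lt_rowLen, hR i hi] at hp
    exact hp.2 hp.1
  rw [Finset.card_eq_sum_card_fiberwise hrows]
  refine Finset.sum_congr rfl fun i _ => ?_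
  have hfiber :
      {p ∈ μ.cells \ ν.cells | p.1 = i} = {i} ×ˢ Finset.Ico (ν.rowLen i) (μ.rowLen i) := by
    ext ⟨a, b⟩
    simp only [Finset.mem_filter, Finset.mem_sdiff, mem_cells, mem_iff_lt_rowLen,
      Finset.mem_product, Finset.mem_singleton, Finset.mem_Ico, not_lt]
    constructor
    · rintro ⟨⟨hb, hb'⟩, rfl⟩
      exact ⟨rfl, hb', hb⟩
    · rintro ⟨rfl, hb', hb⟩
      exact ⟨⟨hb, hb'⟩, rfl⟩
  rw [hfiber, Finset.card_product, Finset.card_singleton, one_mul, Nat.card_Ico]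

def beta (μ : YoungDiagram) (i : ℕ) : ℤ := μ.rowLen i - i

theorem beta_strictAnti (μ : YoungDiagram) : StrictAnti μ.beta :=
  strictAnti_nat_of_succ_lt fun i => by
    have := μ.rowLen_anti i (i + 1) i.le_succ
    simp only [beta]
    omega

theorem exists_beta_lt (μ : YoungDiagram) (e : ℤ) : ∃ i, μ.beta i < e := by
  refine ⟨(μ.rowLen 0 - e + 1).toNat, ?_⟩
  have := μ.rowLen_anti 0 (μ.rowLen 0 - e + 1).toNat (Nat.zero_le _)
  simp only [beta]
  omega

theorem exists_beta_succ_lt_lt_beta {μ : YoungDiagram} {e : ℤ} {x : ℕ}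
    (he : e ∉ Set.range μ.beta)
    (hx : e < μ.beta x) : ∃ c, x ≤ c ∧ e < μ.beta c ∧ μ.beta (c + 1) < e := by
  classical
  have hex := μ.exists_beta_lt e
  have hxn : x < Nat.find hex := by
    by_contra! hnx
    exact (Nat.find_spec hex).not_ge (hx.le.trans (μ.beta_strictAnti.antitone hnx))
  refine ⟨Nat.find hex - 1, by omega, ?_, ?_⟩
  · exact lt_of_le_of_ne (not_lt.mp (Nat.find_min hex (by omega))) fun h => he ⟨_, h.symm⟩
  · rw [Nat.sub_add_cancel (by omega)]
    exact Nat.find_spec hex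

end YoungDiagram

open YoungDiagram

theorem IsAddableBox.rowLen_eq {μ : YoungDiagram} {a b : ℕ} (h : IsAddableBox μ a b) :
    μ.rowLen a = b := by
  obtain ⟨hab, hleft | hleft, -⟩ := h
  · subst hleft
    exact Nat.eq_zero_of_not_pos fun hpos => hab (mem_iff_lt_rowLen.mpr hpos)
  · have := mem_iff_lt_rowLen.mp hleft
    have := mem_iff_lt_rowLen.not.mp hab
    omega

theorem IsAddableBox.beta_add_one_notMem {μ : YoungDiagram} {a b : ℕ}
    (h : IsAddableBox μ a b) : μ.beta a + 1 ∉ Set.range μ.beta := by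
  have hlen := h.rowLen_eq
  rintro ⟨r, hr⟩
  obtain ⟨-, -, hup⟩ := h
  rcases lt_trichotomy r a with hra | rfl | hra
  · have hup : b < μ.rowLen (a - 1) := by
      rcases hup with rfl | hup
      · omega
      · exact mem_iff_lt_rowLen.mp hup
    have := μ.beta_strictAnti.antitone (show r ≤ a - 1 by omega)
    simp only [beta, hlen] at hr this
    omega
  · omega
  · have := μ.beta_strictAnti hra
    omega

theorem IsRemovableBox.rowLen_eq {μ : YoungDiagram} {c d : ℕ} (h : IsRemovableBox μ c d) :
    μ.rowLen c = d + 1 := by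
  obtain ⟨hcd, hright, -⟩ := h
  have := mem_iff_lt_rowLen.mp hcd
  have := mem_iff_lt_rowLen.not.mp hright
  omega

theorem IsRemovableBox.beta_sub_one_notMem {μ : YoungDiagram} {c d : ℕ}
    (h : IsRemovableBox μ c d) : μ.beta c - 1 ∉ Set.range μ.beta := by
  have hlen := h.rowLen_eq
  rintro ⟨r, hr⟩
  obtain ⟨-, -, hdown⟩ := h
  rcases lt_or_ge c r with hcr | hcr
  · have hdown : μ.rowLen (c + 1) ≤ d := not_lt.mp (mem_iff_lt_rowLen.not.mp hdown)
    have := μ.beta_strictAnti.antitone (show c + 1 ≤ r by omega)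
    simp only [beta, hlen] at hr this
    push_cast at this
    omega
  · have := μ.beta_strictAnti.antitone hcr
    omega

theorem resBox_eq_resBox_iff {ℓ a b c d : ℕ} :
    resBox ℓ a b = resBox ℓ c d ↔ (ℓ : ℤ) ∣ ((b : ℤ) - a) - ((d : ℤ) - c) := by
  rw [← ZMod.intCast_eq_intCast_iff_dvd_sub]
  simp [resBox, eq_comm]

theorem AdjCell.symm {p q : ℕ × ℕ} (h : AdjCell p q) : AdjCell q p := by
  unfold AdjCell at *
  omega

theorem connectedCells_of_forall_reflTransGen {s : Finset (ℕ × ℕ)} (o : ℕ × ℕ)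
    (h : ∀ p ∈ s, Relation.ReflTransGen (fun x y => x ∈ s ∧ y ∈ s ∧ AdjCell x y) p o) :
    ConnectedCells s := by
  have : Std.Symm (fun x y => x ∈ s ∧ y ∈ s ∧ AdjCell x y) :=
    ⟨fun _ _ hxy => ⟨hxy.2.1, hxy.1, hxy.2.2.symm⟩⟩
  exact fun p hp q hq => (h p hp).trans (symm (h q hq))

structure IsRibbonShape (s : Finset (ℕ × ℕ)) (lo hi : ℕ → ℕ) (x c : ℕ) : Prop where
  mem_iff : ∀ a b, (a, b) ∈ s ↔ x ≤ a ∧ a ≤ c ∧ lo a ≤ b ∧ b < hi a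
  lo_lt_hi : ∀ r, x ≤ r → r ≤ c → lo r < hi r
  lo_add_one : ∀ r, x ≤ r → r < c → lo r + 1 = hi (r + 1)
  hi_succ_le : ∀ r, x ≤ r → r < c → hi (r + 1) ≤ hi r

namespace IsRibbonShape

variable {s : Finset (ℕ × ℕ)} {lo hi : ℕ → ℕ} {x c : ℕ}

local notation "AdjIn " s => fun p q => p ∈ s ∧ q ∈ s ∧ AdjCell p q

theorem reflTransGen_row_end (hs : IsRibbonShape s lo hi x c) {a b : ℕ} (hab : (a, b) ∈ s) :
    Relation.ReflTransGen (AdjIn s) (a, b) (a, hi a - 1) := by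
  obtain ⟨n, hn⟩ : ∃ n, b + n + 1 = hi a :=
    ⟨hi a - 1 - b, by have := (hs.mem_iff a b).mp hab; omega⟩
  induction n generalizing b with
  | zero => rw [show hi a - 1 = b by omega]
  | succ n ih =>
    have hab' : (a, b + 1) ∈ s := by
      have := (hs.mem_iff a b).mp hab
      exact (hs.mem_iff a (b + 1)).mpr (by omega)
    exact .head ⟨hab, hab', .inl ⟨rfl, .inr rfl⟩⟩ (ih hab' (by omega))

theorem reflTransGen_top (hs : IsRibbonShape s lo hi x c) {r : ℕ} (hxr : x ≤ r)
    (hrc : r ≤ c) :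
    Relation.ReflTransGen (AdjIn s) (r, hi r - 1) (x, hi x - 1) := by
  induction r, hxr using Nat.le_induction with
  | base => rfl
  | succ r hxr ih =>
    have hlo := hs.lo_lt_hi (r + 1) (by omega) hrc
    have hne := hs.lo_add_one r hxr (by omega)
    have hle := hs.hi_succ_le r hxr (by omega)
    have hcur : (r + 1, hi (r + 1) - 1) ∈ s := (hs.mem_iff _ _).mpr (by omega)
    have hup : (r, hi (r + 1) - 1) ∈ s := (hs.mem_iff _ _).mpr (by omega)
    exact .head ⟨hcur, hup, .inr ⟨rfl, .inl rfl⟩⟩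
      ((hs.reflTransGen_row_end hup).trans (ih (by omega)))

theorem connectedCells (hs : IsRibbonShape s lo hi x c) : ConnectedCells s := by
  refine connectedCells_of_forall_reflTransGen (x, hi x - 1) ?_
  rintro ⟨a, b⟩ hab
  obtain ⟨hxa, hac, -⟩ := (hs.mem_iff a b).mp hab
  exact (hs.reflTransGen_row_end hab).trans (hs.reflTransGen_top hxa hac)

theorem no2x2 (hs : IsRibbonShape s lo hi x c) : No2x2 s := by
  rintro ⟨a, b, hab, -, -, hab'⟩
  have := (hs.mem_iff _ _).mp hab
  have := (hs.mem_iff _ _).mp hab'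
  have := hs.lo_add_one a (by omega) (by omega)
  omega

end IsRibbonShape

namespace YoungDiagram

variable {μ : YoungDiagram} {x c r : ℕ} {e : ℤ}

/-- The row lengths left after sliding the bead `μ.beta x` down to the gap `e`: rows
`x + 1, …, c` each move up one row and lose a cell, and row `c` ends with `beta = e`. -/
def ribbonRowLen (μ : YoungDiagram) (x c : ℕ) (e : ℤ) (r : ℕ) : ℕ :=
  if r < x ∨ c < r then μ.rowLen r else if r < c then μ.rowLen (r + 1) - 1 else (e + c).toNat

theorem ribbonRowLen_of_lt_or_lt (h : r < x ∨ c < r) : μ.ribbonRowLen x c e r = μ.rowLen r := by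
  simp [ribbonRowLen, h]

theorem ribbonRowLen_of_le_of_lt (hxr : x ≤ r) (hrc : r < c) :
    μ.ribbonRowLen x c e r = μ.rowLen (r + 1) - 1 := by
  simp [ribbonRowLen, hrc, hrc.le, not_lt.mpr hxr]

theorem ribbonRowLen_self (hxc : x ≤ c) : μ.ribbonRowLen x c e c = (e + c).toNat := by
  simp [ribbonRowLen, not_lt.mpr hxc]

theorem rowLen_pos_of_beta_succ_lt (hc : e < μ.beta c) (hc1 : μ.beta (c + 1) < e)
    (hrc : r ≤ c) : 0 < μ.rowLen r := by
  have := μ.rowLen_anti r c hrc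
  simp only [beta] at hc hc1
  push_cast at hc1
  omega

theorem ribbonRowLen_lt (hc : e < μ.beta c) (hc1 : μ.beta (c + 1) < e) (hxr : x ≤ r)
    (hrc : r ≤ c) : μ.ribbonRowLen x c e r < μ.rowLen r := by
  have hpos := rowLen_pos_of_beta_succ_lt hc hc1 le_rfl
  rcases hrc.lt_or_eq with hrc | rfl
  · have := μ.rowLen_anti r (r + 1) r.le_succ
    have := rowLen_pos_of_beta_succ_lt hc hc1 (show r + 1 ≤ c by omega)
    rw [ribbonRowLen_of_le_of_lt hxr hrc]
    omega
  · rw [ribbonRowLen_self hxr]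
    simp only [beta] at hc
    omega

theorem ribbonRowLen_le (hc : e < μ.beta c) (hc1 : μ.beta (c + 1) < e) (r : ℕ) :
    μ.ribbonRowLen x c e r ≤ μ.rowLen r := by
  by_cases h : r < x ∨ c < r
  · exact (ribbonRowLen_of_lt_or_lt h).le
  · exact (ribbonRowLen_lt hc hc1 (by omega) (by omega)).le

theorem ribbonRowLen_antitone (hxc : x ≤ c) (hc : e < μ.beta c) (hc1 : μ.beta (c + 1) < e) :
    Antitone (μ.ribbonRowLen x c e) := by
  refine antitone_nat_of_succ_le fun r => ?_
  have hanti := μ.rowLen_anti r (r + 1) r.le_succ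
  rcases lt_or_ge r x with hrx | hxr
  · rw [ribbonRowLen_of_lt_or_lt (.inl hrx)]
    exact (ribbonRowLen_le hc hc1 _).trans hanti
  rcases lt_trichotomy r c with hrc | rfl | hcr
  · have := ribbonRowLen_lt hc hc1 (show x ≤ r + 1 by omega) hrc
    rw [ribbonRowLen_of_le_of_lt hxr hrc]
    omega
  · rw [ribbonRowLen_self hxr, ribbonRowLen_of_lt_or_lt (show r + 1 < x ∨ r < r + 1 by omega)]
    simp only [beta] at hc1
    push_cast at hc1
    omega
  · rw [ribbonRowLen_of_lt_or_lt (.inr hcr), ribbonRowLen_of_lt_or_lt (.inr (by omega))]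
    exact hanti

def removeRibbon (μ : YoungDiagram) (hxc : x ≤ c) (hc : e < μ.beta c)
    (hc1 : μ.beta (c + 1) < e) : YoungDiagram :=
  μ.restrictRowLen (μ.ribbonRowLen x c e) (ribbonRowLen_antitone hxc hc hc1)

section

variable (hxc : x ≤ c) (hc : e < μ.beta c) (hc1 : μ.beta (c + 1) < e)

theorem rowLen_removeRibbon (r : ℕ) :
    (μ.removeRibbon hxc hc hc1).rowLen r = μ.ribbonRowLen x c e r := by
  rw [removeRibbon, rowLen_restrictRowLen, min_eq_left (ribbonRowLen_le hc hc1 r)]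

theorem isRibbonShape_removeRibbon :
    IsRibbonShape (μ.cells \ (μ.removeRibbon hxc hc hc1).cells) (μ.ribbonRowLen x c e) μ.rowLen
      x c where
  mem_iff a b := by
    simp only [Finset.mem_sdiff, mem_cells, mem_iff_lt_rowLen, rowLen_removeRibbon, not_lt]
    by_cases h : a < x ∨ c < a
    · rw [ribbonRowLen_of_lt_or_lt h]
      omega
    · omega
  lo_lt_hi _ hxr hrc := ribbonRowLen_lt hc hc1 hxr hrc
  lo_add_one r hxr hrc := by
    have := rowLen_pos_of_beta_succ_lt hc hc1 (show r + 1 ≤ c by omega)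
    rw [ribbonRowLen_of_le_of_lt hxr hrc]
    omega
  hi_succ_le r _ _ := μ.rowLen_anti r (r + 1) r.le_succ

theorem card_removeRibbon :
    ((μ.cells \ (μ.removeRibbon hxc hc hc1).cells).card : ℤ) = μ.beta x - e := by
  set F : ℕ → ℤ := fun r => if r ≤ c then μ.beta r else e
  have hterm : ∀ r ∈ Finset.Icc x c,
      ((μ.rowLen r - (μ.removeRibbon hxc hc hc1).rowLen r : ℕ) : ℤ) = -F (r + 1) - -F r := by
    intro r hr
    obtain ⟨hxr, hrc⟩ := Finset.mem_Icc.mp hr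
    rw [rowLen_removeRibbon, Nat.cast_sub (ribbonRowLen_le hc hc1 r)]
    rcases hrc.lt_or_eq with hrc | rfl
    · have := rowLen_pos_of_beta_succ_lt hc hc1 (show r + 1 ≤ c by omega)
      simp only [F, ribbonRowLen_of_le_of_lt hxr hrc, if_pos hrc.le,
        if_pos (show r + 1 ≤ c by omega), beta]
      push_cast
      omega
    · have := ribbonRowLen_lt hc hc1 hxr le_rfl
      rw [ribbonRowLen_self hxr] at this ⊢
      simp only [F, if_pos le_rfl, if_neg (show ¬ r + 1 ≤ r by omega), beta] at hc1 ⊢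
      push_cast at hc1
      omega
  rw [card_cells_sdiff (Finset.Icc x c) fun r hr => by
      rw [rowLen_removeRibbon, ribbonRowLen_of_lt_or_lt (by simp at hr; omega)],
    Nat.cast_sum, Finset.sum_congr rfl hterm, Finset.sum_Icc_sub hxc fun r => -F r]
  simp only [F, if_neg (show ¬ c + 1 ≤ c by omega), if_pos hxc]
  ring

theorem isRemovableRimHook_removeRibbon {ℓ : ℕ} (hx : μ.beta x = e + ℓ) :
    IsRemovableRimHook ℓ μ (μ.cells \ (μ.removeRibbon hxc hc hc1).cells) := by
  have hs := isRibbonShape_removeRibbon hxc hc hc1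
  refine ⟨_, restrictRowLen_le _ _ _, rfl, ?_, hs.connectedCells, hs.no2x2⟩
  have := card_removeRibbon hxc hc hc1
  omega

end

theorem beta_removeRibbon_self (hc : e < μ.beta x) (hc1 : μ.beta (x + 1) < e)
    (r : ℕ) : (μ.removeRibbon le_rfl hc hc1).beta r = if r = x then e else μ.beta r := by
  have hx1 := hc1
  simp only [beta] at hx1 ⊢
  push_cast at hx1
  rw [rowLen_removeRibbon]
  split_ifs with hrx
  · subst hrx
    rw [ribbonRowLen_self le_rfl]
    omega
  · rw [ribbonRowLen_of_lt_or_lt (by omega)]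

end YoungDiagram

theorem exists_mem_and_sub_notMem {B : Set ℤ} {v d : ℤ} {k : ℕ} (hv : v ∈ B)
    (hk : v - k * d ∉ B) : ∃ j < k, v - j * d ∈ B ∧ v - j * d - d ∉ B := by
  induction k with
  | zero => simp_all
  | succ k ih =>
    by_cases hkB : v - k * d ∈ B
    · refine ⟨k, k.lt_succ_self, hkB, ?_⟩
      rwa [sub_sub, ← add_one_mul, ← Nat.cast_succ]
    · obtain ⟨j, hjk, hj⟩ := ih hkB
      exact ⟨j, hjk.trans k.lt_succ_self, hj⟩

/-- In the abacus `B` of beta numbers of a partition, an addable box is a bead `v` followed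
by a gap and a removable box is a bead `w` preceded by a gap; the boxes have the same
residue iff `ℓ ∣ v + 1 - w`, and the addable one lies in a higher row iff `w < v`. -/
structure AddableAboveRemovable (ℓ : ℕ) (B : Set ℤ) (v w : ℤ) : Prop where
  mem_top : v ∈ B
  succ_notMem : v + 1 ∉ B
  mem_bot : w ∈ B
  pred_notMem : w - 1 ∉ B
  lt : w < v
  dvd : (ℓ : ℤ) ∣ v + 1 - w

namespace AddableAboveRemovable

variable {ℓ : ℕ} {B : Set ℤ} {v w : ℤ}

theorem exists_mem_sub_notMem (hℓ : 0 < ℓ) (h : AddableAboveRemovable ℓ B v w) :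
    ∃ δ ∈ B, δ - ℓ ∉ B ∧ w - 1 + ℓ ≤ δ ∧ δ ≤ v ∧ (ℓ : ℤ) ∣ v - δ := by
  obtain ⟨k, hk⟩ := h.dvd
  have hk0 : 0 ≤ k := by
    by_contra! hneg
    nlinarith [h.lt]
  lift k to ℕ using hk0
  obtain ⟨j, hjk, hjB, hjgap⟩ := exists_mem_and_sub_notMem (d := ℓ) h.mem_top
    (show v - k * ℓ ∉ B by rw [show v - k * ℓ = w - 1 by linarith]; exact h.pred_notMem)
  have hjk' : ((j + 1 : ℕ) : ℤ) * ℓ ≤ k * ℓ := by gcongr; omega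
  push_cast at hjk'
  exact ⟨_, hjB, hjgap, by linarith, by nlinarith, ⟨j, by ring⟩⟩

/-- `B'` is `B` with the bead `δ` slid down to the gap `δ - ℓ` across no other bead. -/
theorem moveBead (hℓ : 2 ≤ ℓ) (h : AddableAboveRemovable ℓ B v w) {B' : Set ℤ} {δ : ℤ}
    (hδw : w - 1 + ℓ ≤ δ) (hdvd : (ℓ : ℤ) ∣ v - δ)
    (hclear : ∀ u ∈ B, δ - ℓ ≤ u → u < δ → False)
    (hB' : ∀ u, u ∈ B' ↔ u = δ - ℓ ∨ (u ∈ B ∧ u ≠ δ)) :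
    AddableAboveRemovable ℓ B' (δ - ℓ) w := by
  have hℓ' : (2 : ℤ) ≤ ℓ := by exact_mod_cast hℓ
  have hw : w ≠ δ - ℓ + 1 := fun hw => hclear w h.mem_bot (by omega) (by omega)
  refine ⟨(hB' _).mpr (.inl rfl), ?_, (hB' _).mpr (.inr ⟨h.mem_bot, by omega⟩), ?_, ?_, ?_⟩
  · rw [hB']
    rintro (hu | ⟨hu, -⟩)
    · omega
    · exact hclear _ hu (by omega) (by omega)
  · rw [hB']
    rintro (hu | ⟨hu, -⟩)
    · omega
    · exact h.pred_notMem hu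
  · have : w ≠ δ - ℓ := fun hw => hclear w h.mem_bot (by omega) (by omega)
    omega
  · have := dvd_sub h.dvd hdvd
    rwa [show v + 1 - w - (v - δ) = δ - ℓ + 1 - w + ℓ by ring, dvd_add_self_right] at this

end AddableAboveRemovable

namespace YoungDiagram

variable {ℓ : ℕ} {μ : YoungDiagram} {v w : ℤ}

theorem exists_removeHorizHook_of_addableAboveRemovable (hℓ : 2 ≤ ℓ)
    (hhor : ∀ s, IsRemovableRimHook ℓ μ s → HorizontalCells s)
    (h : AddableAboveRemovable ℓ (Set.range μ.beta) v w) :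
    ∃ μ' v', RemoveHorizHook ℓ μ μ' ∧ AddableAboveRemovable ℓ (Set.range μ'.beta) v' w ∧
      v' < v := by
  obtain ⟨_, ⟨x, rfl⟩, hgap, hδw, hδv, hdvd⟩ := h.exists_mem_sub_notMem (by omega)
  obtain ⟨c, hxc, hc, hc1⟩ := exists_beta_succ_lt_lt_beta (x := x) hgap (by omega)
  have hhook := isRemovableRimHook_removeRibbon hxc hc hc1 (sub_add_cancel _ _).symm
  have hs := isRibbonShape_removeRibbon hxc hc hc1
  have hend : ∀ r, x ≤ r → r ≤ c →
      (r, μ.rowLen r - 1) ∈ μ.cells \ (μ.removeRibbon hxc hc hc1).cells :=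
    fun r hxr hrc => by
      have := ribbonRowLen_lt hc hc1 hxr hrc
      exact (hs.mem_iff _ _).mpr ⟨hxr, hrc, by omega, by omega⟩
  obtain rfl : x = c := hhor _ hhook _ (hend x le_rfl hxc) _ (hend c hxc le_rfl)
  have hclear : ∀ u ∈ Set.range μ.beta, μ.beta x - ℓ ≤ u → u < μ.beta x → False := by
    rintro _ ⟨r, rfl⟩ hlo hhi
    rcases lt_trichotomy r x with hrx | rfl | hxr
    · exact (μ.beta_strictAnti hrx).not_gt hhi
    · exact hhi.false
    · exact hc1.not_ge (hlo.trans (μ.beta_strictAnti.antitone hxr))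
  have hmove : ∀ u, u ∈ Set.range (μ.removeRibbon le_rfl hc hc1).beta ↔
      u = μ.beta x - ℓ ∨ (u ∈ Set.range μ.beta ∧ u ≠ μ.beta x) := by
    intro u
    simp only [Set.mem_range, beta_removeRibbon_self]
    constructor
    · rintro ⟨r, rfl⟩
      split_ifs with hrx
      · exact .inl rfl
      · exact .inr ⟨⟨r, rfl⟩, fun hr => hrx (μ.beta_strictAnti.injective hr)⟩
    · rintro (rfl | ⟨⟨r, rfl⟩, hne⟩)
      · exact ⟨x, if_pos rfl⟩
      · exact ⟨r, if_neg fun hrx => hne (by rw [hrx])⟩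
  refine ⟨_, _, ⟨_, hhook, hhor _ hhook, ?_⟩, h.moveBead hℓ hδw hdvd hclear hmove,
    by omega⟩
  exact (Finset.sdiff_sdiff_eq_self (cells_subset_iff.mpr (restrictRowLen_le _ _ _))).symm

theorem not_addableAboveRemovable_of_reflTransGen (hℓ : 2 ≤ ℓ) {lam : YoungDiagram}
    (hhor : ∀ μ, Relation.ReflTransGen (RemoveHorizHook ℓ) lam μ →
      ∀ s, IsRemovableRimHook ℓ μ s → HorizontalCells s)
    (hμ : Relation.ReflTransGen (RemoveHorizHook ℓ) lam μ) :
    ¬ AddableAboveRemovable ℓ (Set.range μ.beta) v w := by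
  intro h
  obtain ⟨n, hn⟩ : ∃ n : ℕ, v - w ≤ n := ⟨(v - w).toNat, Int.self_le_toNat _⟩
  induction n generalizing μ v with
  | zero => have := h.lt; omega
  | succ n ih =>
    obtain ⟨μ', v', hstep, h', hv'⟩ :=
      exists_removeHorizHook_of_addableAboveRemovable hℓ (hhor μ hμ) h
    exact ih (hμ.tail hstep) h' (by push_cast at hn; omega)

end YoungDiagram

/-- If `lam` is an `ℓ`-partition, then its `i`-signature equals its reduced
`i`-signature: there is no addable `i`-box of `lam` in a row strictly above a
removable `i`-box of `lam`. -/
theorem stmt_12 (ℓ : ℕ) (hℓ : 2 ≤ ℓ) (i : ZMod ℓ) (lam : YoungDiagram)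
    (h : IsEllPartition ℓ lam) :
    ¬ ∃ a b c d : ℕ, IsAddableBox lam a b ∧ IsRemovableBox lam c d ∧
      resBox ℓ a b = i ∧ resBox ℓ c d = i ∧ a < c := by
  rintro ⟨a, b, c, d, hadd, hrem, rfl, hres, hac⟩
  refine not_addableAboveRemovable_of_reflTransGen hℓ h.2 .refl
    ⟨⟨a, rfl⟩, hadd.beta_add_one_notMem, ⟨c, rfl⟩, hrem.beta_sub_one_notMem,
      lam.beta_strictAnti hac, ?_⟩
  have := resBox_eq_resBox_iff.mp hres.symm
  simp only [beta, hadd.rowLen_eq, hrem.rowLen_eq]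
  push_cast
  convert this using 1
  ring
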